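/- For every odd positive integer k and every real ε > 0, the proportion (1/(2n)^n) · |{ x ∈ X_{ψ_n} : | m_k(x)/(2n) − (1−θ)/(e·k!) | < ε }| converges to 1 as n → ∞. (In other words, in asymptotically all ψ-symmetric vectors x there are about (1−θ)·M/(e·k!) distinct components that each occur exactly k times.) -/

import Mathlib

open Finset

/-- The set of ψ-symmetric vectors of length `M`: vectors `x` with
`x (M+1-j) = ψ (x j)` for all `j` (0-indexed: `x j.rev = ψ (x j)`). -/
def Xpsi (α : Type*) [Fintype α] [DecidableEq α] (M : ℕ) (ψ : α → α) :
    Finset (Fin M → α) :=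
  Finset.univ.filter fun x => ∀ j : Fin M, x j.rev = ψ (x j)

/-- The number of occurrences of `y` among the components of `x`. -/
def occCount {α : Type*} {M : ℕ} [DecidableEq α] (x : Fin M → α) (y : α) : ℕ :=
  (Finset.univ.filter fun j => x j = y).card

/-- `mCount x k` is the number of elements occurring exactly `k` times among
the components of `x`. -/
def mCount {α : Type*} {M : ℕ} [Fintype α] [DecidableEq α] (x : Fin M → α) (k : ℕ) : ℕ :=
  (Finset.univ.filter fun y => occCount x y = k).card

/-- The set of fixed points of `ψ`. -/
def fixPts (α : Type*) [Fintype α] [DecidableEq α] (ψ : α → α) : Finset α :=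
  Finset.univ.filter fun y => ψ y = y

/-!
A ψ-symmetric vector `x` of length `2n` is determined by its first half `f : Fin n → α`, and `y`
occurs in `x` exactly `occCount f y + occCount f (ψ y)` times. For odd `k` a fixed point of `ψ`
therefore never occurs `k` times, while a non-fixed `y` does iff `f` hits the pair `{y, ψ y}`
exactly `k` times. For uniform `f` this has binomial probability
`C(n,k) n⁻ᵏ (1 - 1/n)^(n-k) → e⁻¹/k!`, two disjoint pairs are hit `k` times each with probability
tending to `(e⁻¹/k!)²`, and there are `(1 - θ)·2n + o(n)` non-fixed points. Hence
`m_k(x)/2n` has mean tending to `p = (1 - θ)/(e·k!)` and second moment tending to `p²`, and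
Chebyshev's inequality concentrates it at `p`.
-/

open Filter Topology

section HitCount

variable {ι β : Type*} [Fintype ι] [DecidableEq ι] [DecidableEq β]

def hitCount (f : ι → β) (S : Finset β) : ℕ := #{j | f j ∈ S}

theorem hitCount_pair (f : ι → β) {y y' : β} (h : y ≠ y') :
    hitCount f {y, y'} = #{j | f j = y} + #{j | f j = y'} := by
  rw [hitCount, ← card_union_of_disjoint (disjoint_filter.2 fun j _ h1 h2 => h (h1.symm.trans h2))]
  congr 1
  ext j
  simp

variable [Fintype β]

theorem filter_preimage_eq_eq_piFinset {S S' : Finset β} (hS : Disjoint S S')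
    {T T' : Finset ι} (hT : Disjoint T T') :
    univ.filter (fun f : ι → β => univ.filter (f · ∈ S) = T ∧ univ.filter (f · ∈ S') = T') =
      Fintype.piFinset fun j => if j ∈ T then S else if j ∈ T' then S' else (S ∪ S')ᶜ := by
  ext f
  simp only [mem_filter, mem_univ, true_and, Fintype.mem_piFinset, Finset.ext_iff,
    ← forall_and]
  refine forall_congr' fun j => ?_
  have hS' : f j ∈ S → f j ∉ S' := fun h => Finset.disjoint_left.1 hS h
  have hT' : j ∈ T → j ∉ T' := fun h => Finset.disjoint_left.1 hT h
  split_ifs <;> (try simp only [mem_compl, mem_union]) <;> tauto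

theorem card_filter_preimage_eq_eq {S S' : Finset β} (hS : Disjoint S S') {T T' : Finset ι}
    (hT : Disjoint T T') :
    #(univ.filter fun f : ι → β => univ.filter (f · ∈ S) = T ∧ univ.filter (f · ∈ S') = T') =
      #S ^ #T * #S' ^ #T' * #(S ∪ S')ᶜ ^ (Fintype.card ι - #T - #T') := by
  have hT' : ({j | j ∉ T ∧ j ∈ T'} : Finset ι) = T' := by
    ext j
    simpa using fun h => Finset.disjoint_right.1 hT h
  have hrest : ({j | j ∉ T ∧ j ∉ T'} : Finset ι) = (T ∪ T')ᶜ := by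
    ext j
    simp
  rw [filter_preimage_eq_eq_piFinset hS hT, Fintype.card_piFinset]
  simp only [apply_ite card, prod_ite, prod_const, filter_filter, filter_univ_mem, hT', hrest,
    card_compl, card_union_of_disjoint hT, Nat.sub_sub, mul_assoc]

theorem card_filter_hitCount_eq_and_eq {S S' : Finset β} (hS : Disjoint S S') (k l : ℕ) :
    #{f : ι → β | hitCount f S = k ∧ hitCount f S' = l} =
      (Fintype.card ι).choose k * (Fintype.card ι - k).choose l * #S ^ k * #S' ^ l *
        #(S ∪ S')ᶜ ^ (Fintype.card ι - k - l) := by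
  set shapes := (powersetCard k (univ : Finset ι)).sigma fun T => powersetCard l Tᶜ
  set shape : (ι → β) → Σ _ : Finset ι, Finset ι :=
    fun f => ⟨univ.filter (f · ∈ S), univ.filter (f · ∈ S')⟩
  have hshape : ∀ f ∈ ({f : ι → β | hitCount f S = k ∧ hitCount f S' = l} : Finset _),
      shape f ∈ shapes := by
    intro f hf
    simp only [mem_filter, mem_univ, true_and] at hf
    simp only [shapes, shape, mem_sigma, mem_powersetCard, subset_univ, true_and,
      subset_compl_iff_disjoint_left]
    exact ⟨hf.1, disjoint_filter.2 fun j _ h h' => Finset.disjoint_left.1 hS h h', hf.2⟩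
  have hfiber : ∀ p ∈ shapes,
      #{f ∈ ({f : ι → β | hitCount f S = k ∧ hitCount f S' = l} : Finset _) | shape f = p} =
        #S ^ k * #S' ^ l * #(S ∪ S')ᶜ ^ (Fintype.card ι - k - l) := by
    rintro ⟨T, T'⟩ hp
    simp only [shapes, mem_sigma, mem_powersetCard, subset_univ, true_and,
      subset_compl_iff_disjoint_left] at hp
    obtain ⟨hTk, hTT', hT'l⟩ := hp
    rw [filter_filter, ← hTk, ← hT'l, ← card_filter_preimage_eq_eq hS hTT']
    congr 1
    refine filter_congr fun f _ => ?_
    simp only [shape, Sigma.mk.injEq, heq_eq_eq, hitCount]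
    constructor
    · exact fun h => h.2
    · rintro ⟨rfl, rfl⟩
      exact ⟨⟨rfl, rfl⟩, rfl, rfl⟩
  rw [card_eq_sum_card_fiberwise hshape, sum_congr rfl hfiber, sum_const, card_sigma,
    sum_congr rfl fun T hT => by rw [card_powersetCard, card_compl, (mem_powersetCard.1 hT).2],
    sum_const, card_powersetCard, card_univ, smul_eq_mul, smul_eq_mul]
  ring

theorem card_filter_hitCount_eq_and_eq_div [Nonempty β] {S S' : Finset β} (hS : Disjoint S S')
    (k l : ℕ) :
    (#{f : ι → β | hitCount f S = k ∧ hitCount f S' = l} : ℝ) /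
        Fintype.card β ^ Fintype.card ι =
      (Fintype.card ι).choose k * (Fintype.card ι - k).choose l * (#S / Fintype.card β) ^ k *
        (#S' / Fintype.card β) ^ l *
        (1 - (#S + #S') / Fintype.card β) ^ (Fintype.card ι - k - l) := by
  have hM : (Fintype.card β : ℝ) ≠ 0 := by exact_mod_cast Fintype.card_ne_zero
  have hcompl : (#(S ∪ S')ᶜ : ℝ) = Fintype.card β - (#S + #S') := by
    rw [card_compl, Nat.cast_sub (card_le_univ _), card_union_of_disjoint hS, Nat.cast_add]
  rw [card_filter_hitCount_eq_and_eq hS]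
  push_cast
  rw [hcompl]
  by_cases hkl : k + l ≤ Fintype.card ι
  · obtain ⟨m, hm⟩ := Nat.exists_eq_add_of_le hkl
    rw [hm, Nat.sub_sub, Nat.add_sub_cancel_left, pow_add, pow_add, one_sub_div hM]
    simp only [div_pow]
    field_simp
  · have hchoose : (Fintype.card ι).choose k * (Fintype.card ι - k).choose l = 0 := by
      rcases lt_or_ge (Fintype.card ι) k with h | h
      · simp [Nat.choose_eq_zero_of_lt h]
      · simp [Nat.choose_eq_zero_of_lt (show Fintype.card ι - k < l by omega)]
    have hchoose' : ((Fintype.card ι).choose k : ℝ) * (Fintype.card ι - k).choose l = 0 := by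
      exact_mod_cast hchoose
    simp [hchoose']

theorem card_filter_hitCount_eq_div [Nonempty β] (S : Finset β) (k : ℕ) :
    (#{f : ι → β | hitCount f S = k} : ℝ) / Fintype.card β ^ Fintype.card ι =
      (Fintype.card ι).choose k * (#S / Fintype.card β) ^ k *
        (1 - #S / Fintype.card β) ^ (Fintype.card ι - k) := by
  have hfilter : ({f : ι → β | hitCount f S = k} : Finset _) =
      ({f : ι → β | hitCount f S = k ∧ hitCount f ∅ = 0} : Finset _) := by
    ext f
    rw [mem_filter, mem_filter]
    simp [hitCount]
  rw [hfilter, card_filter_hitCount_eq_and_eq_div (disjoint_empty_right S)]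
  simp

end HitCount

section Pairs

variable {β : Type*} [DecidableEq β] {ψ : β → β}

theorem pair_eq_of_mem (hψ : Function.Involutive ψ) {y y' : β} (h : y' ∈ ({y, ψ y} : Finset β)) :
    ({y', ψ y'} : Finset β) = {y, ψ y} := by
  rcases mem_insert.1 h with rfl | h
  · rfl
  · rw [mem_singleton.1 h, hψ y, pair_comm]

theorem disjoint_pair_of_notMem (hψ : Function.Involutive ψ) {y y' : β}
    (h : y' ∉ ({y, ψ y} : Finset β)) : Disjoint ({y, ψ y} : Finset β) {y', ψ y'} := by
  have := hψ y
  have := hψ y'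
  simp only [mem_insert, mem_singleton, not_or] at h
  simp only [disjoint_insert_left, disjoint_insert_right, disjoint_singleton, mem_insert,
    mem_singleton]
  grind

variable [Fintype β]

theorem mem_fixPts_compl {y : β} : y ∈ (fixPts β ψ)ᶜ ↔ ψ y ≠ y := by
  simp [fixPts]

theorem pair_subset_fixPts_compl (hψ : Function.Involutive ψ) {y : β}
    (hy : y ∈ (fixPts β ψ)ᶜ) : ({y, ψ y} : Finset β) ⊆ (fixPts β ψ)ᶜ := by
  rw [insert_subset_iff, singleton_subset_iff, mem_fixPts_compl, mem_fixPts_compl, hψ y]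
  exact ⟨mem_fixPts_compl.1 hy, (mem_fixPts_compl.1 hy).symm⟩

end Pairs

section DoubleCounting

variable {γ δ : Type*} [Fintype γ] (s : Finset δ) (P : γ → δ → Prop) [∀ a b, Decidable (P a b)]

theorem sum_card_filter_comm : ∑ a, #{b ∈ s | P a b} = ∑ b ∈ s, #{a | P a b} := by
  simp only [card_filter]
  exact sum_comm

theorem sum_card_filter_sq :
    ∑ a, #{b ∈ s | P a b} ^ 2 = ∑ b ∈ s, ∑ b' ∈ s, #{a | P a b ∧ P a b'} := by
  simp only [card_filter, sq, sum_mul_sum, ite_zero_mul_ite_zero, mul_one]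
  rw [sum_comm]
  exact sum_congr rfl fun b _ => sum_comm

end DoubleCounting

noncomputable def binomialProb (n k : ℕ) (q : ℝ) : ℝ := n.choose k * q ^ k * (1 - q) ^ (n - k)

/-- The probability that in `n` independent trials two disjoint events of probability `q` each
occur exactly `k` times. -/
noncomputable def trinomialProb (n k : ℕ) (q : ℝ) : ℝ :=
  n.choose k * (n - k).choose k * q ^ k * q ^ k * (1 - 2 * q) ^ (n - k - k)

section PairHitCount

variable {ι β : Type*} [Fintype ι] [DecidableEq ι] [Fintype β] [DecidableEq β] {ψ : β → β}

/-- Both `y` and `ψ y` are counted, as `mCount` does on the symmetric extension. -/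
def pairHitCount (ψ : β → β) (k : ℕ) (f : ι → β) : ℕ :=
  #{y ∈ (fixPts β ψ)ᶜ | hitCount f {y, ψ y} = k}

theorem sum_pairHitCount_div [Nonempty β] (k : ℕ) :
    (∑ f : ι → β, (pairHitCount ψ k f : ℝ)) / Fintype.card β ^ Fintype.card ι =
      #(fixPts β ψ)ᶜ * binomialProb (Fintype.card ι) k (2 / Fintype.card β) := by
  simp only [pairHitCount]
  rw [← Nat.cast_sum, sum_card_filter_comm, Nat.cast_sum, sum_div, ← nsmul_eq_mul, ← sum_const]
  refine sum_congr rfl fun y hy => ?_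
  rw [card_filter_hitCount_eq_div, card_pair (mem_fixPts_compl.1 hy).symm, binomialProb,
    Nat.cast_ofNat]

theorem sum_card_filter_hitCount_pair_div [Nonempty β] (hψ : Function.Involutive ψ) (k : ℕ)
    {y : β} (hy : y ∈ (fixPts β ψ)ᶜ) :
    ∑ y' ∈ (fixPts β ψ)ᶜ,
        (#{f : ι → β | hitCount f {y, ψ y} = k ∧ hitCount f {y', ψ y'} = k} : ℝ) /
          Fintype.card β ^ Fintype.card ι =
      2 * binomialProb (Fintype.card ι) k (2 / Fintype.card β) +
        (#(fixPts β ψ)ᶜ - 2) * trinomialProb (Fintype.card ι) k (2 / Fintype.card β) := by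
  have hsub := pair_subset_fixPts_compl hψ hy
  have hpair := card_pair (mem_fixPts_compl.1 hy).symm
  have hnear : ∀ y' ∈ ({y, ψ y} : Finset β),
      (#{f : ι → β | hitCount f {y, ψ y} = k ∧ hitCount f {y', ψ y'} = k} : ℝ) /
        Fintype.card β ^ Fintype.card ι = binomialProb (Fintype.card ι) k (2 / Fintype.card β) := by
    intro y' hy'
    simp only [pair_eq_of_mem hψ hy', and_self]
    rw [card_filter_hitCount_eq_div, hpair, binomialProb, Nat.cast_ofNat]
  have hfar : ∀ y' ∈ (fixPts β ψ)ᶜ \ {y, ψ y},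
      (#{f : ι → β | hitCount f {y, ψ y} = k ∧ hitCount f {y', ψ y'} = k} : ℝ) /
        Fintype.card β ^ Fintype.card ι =
        trinomialProb (Fintype.card ι) k (2 / Fintype.card β) := by
    intro y' hy'
    rw [Finset.mem_sdiff] at hy'
    rw [card_filter_hitCount_eq_and_eq_div (disjoint_pair_of_notMem hψ hy'.2), hpair,
      card_pair (mem_fixPts_compl.1 hy'.1).symm, trinomialProb]
    ring_nf
  rw [← sum_sdiff hsub, sum_congr rfl hfar, sum_congr rfl hnear, sum_const, sum_const,
    card_sdiff_of_subset hsub, hpair, nsmul_eq_mul, nsmul_eq_mul,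
    Nat.cast_sub (hpair ▸ card_le_card hsub)]
  push_cast
  ring

theorem sum_pairHitCount_sq_div [Nonempty β] (hψ : Function.Involutive ψ) (k : ℕ) :
    (∑ f : ι → β, (pairHitCount ψ k f : ℝ) ^ 2) / Fintype.card β ^ Fintype.card ι =
      #(fixPts β ψ)ᶜ * (2 * binomialProb (Fintype.card ι) k (2 / Fintype.card β) +
        (#(fixPts β ψ)ᶜ - 2) * trinomialProb (Fintype.card ι) k (2 / Fintype.card β)) := by
  simp only [pairHitCount, ← Nat.cast_pow, ← Nat.cast_sum]
  rw [sum_card_filter_sq, Nat.cast_sum, Nat.cast_pow, sum_div, ← nsmul_eq_mul, ← sum_const]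
  refine sum_congr rfl fun y hy => ?_
  rw [Nat.cast_sum, sum_div, sum_card_filter_hitCount_pair_div hψ k hy]

end PairHitCount

section SymmetricExtension

variable {β : Type*} {ψ : β → β} {n : ℕ}

def symmExtend (ψ : β → β) (f : Fin n → β) : Fin (2 * n) → β :=
  Fin.append f (ψ ∘ f ∘ Fin.rev) ∘ Fin.cast (two_mul n)

def firstHalf (x : Fin (2 * n) → β) : Fin n → β :=
  fun i => x ((Fin.castAdd n i).cast (two_mul n).symm)

theorem firstHalf_symmExtend (f : Fin n → β) : firstHalf (symmExtend ψ f) = f := by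
  funext i
  simp [firstHalf, symmExtend]

variable [DecidableEq β]

theorem occCount_symmExtend (hψ : Function.Involutive ψ) (f : Fin n → β) (y : β) :
    occCount (symmExtend ψ f) y = occCount f y + occCount f (ψ y) := by
  simp only [occCount, card_filter]
  rw [← Fintype.sum_equiv (finCongr (two_mul n)).symm _ _ (fun _ => rfl), Fin.sum_univ_add]
  congr 1
  · simp only [symmExtend, Function.comp_apply, finCongr_symm_apply, Fin.cast_cast,
      Fin.cast_eq_self, Fin.append_left]
  · rw [← Fintype.sum_equiv Fin.revPerm _ _ (fun _ => rfl)]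
    simp only [symmExtend, Function.comp_apply, finCongr_symm_apply, Fin.cast_cast,
      Fin.cast_eq_self, Fin.append_right, Fin.revPerm_apply, Fin.rev_rev, hψ.eq_iff]

variable [Fintype β]

theorem symmExtend_mem_Xpsi (hψ : Function.Involutive ψ) (f : Fin n → β) :
    symmExtend ψ f ∈ Xpsi β (2 * n) ψ := by
  simp only [Xpsi, mem_filter, mem_univ, true_and]
  intro j
  simp only [symmExtend, Function.comp_apply, Fin.cast_rev, Fin.append_rev]
  refine Fin.addCases (fun i => ?_) (fun i => ?_) (j.cast (two_mul n))
  · simp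
  · simp only [Fin.append_right, Function.comp_apply, hψ _]

theorem symmExtend_firstHalf (hψ : Function.Involutive ψ) {x : Fin (2 * n) → β}
    (hx : x ∈ Xpsi β (2 * n) ψ) : symmExtend ψ (firstHalf x) = x := by
  simp only [Xpsi, mem_filter, mem_univ, true_and] at hx
  funext j
  obtain ⟨i, rfl⟩ : ∃ i : Fin (n + n), i.cast (two_mul n).symm = j := ⟨j.cast (two_mul n), rfl⟩
  simp only [symmExtend, Function.comp_apply, Fin.cast_cast, Fin.cast_eq_self]
  refine Fin.addCases (fun i => ?_) (fun i => ?_) i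
  · simp only [Fin.append_left, firstHalf]
  · have hrev : (Fin.castAdd n i.rev).cast (two_mul n).symm =
        ((Fin.natAdd n i).cast (two_mul n).symm).rev := by
      ext
      simp only [Fin.val_cast, Fin.val_castAdd, Fin.val_rev, Fin.val_natAdd]
      omega
    simp only [Fin.append_right, Function.comp_apply, firstHalf, hrev, hx, hψ _]

theorem mCount_symmExtend (hψ : Function.Involutive ψ) {k : ℕ} (hk : Odd k) (f : Fin n → β) :
    mCount (symmExtend ψ f) k = pairHitCount ψ k f := by
  rw [mCount, pairHitCount, ← filter_univ_mem (fixPts β ψ)ᶜ, filter_filter]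
  congr 1
  refine filter_congr fun y _ => ?_
  rw [occCount_symmExtend hψ, mem_fixPts_compl]
  by_cases hy : ψ y = y
  · simp only [hy, ne_eq, not_true_eq_false, false_and, iff_false]
    rintro h
    exact Nat.not_even_iff_odd.2 hk ⟨_, h.symm⟩
  · rw [hitCount_pair f (Ne.symm hy)]
    simp [occCount, hy]

theorem card_filter_Xpsi_mCount (hψ : Function.Involutive ψ) {k : ℕ} (hk : Odd k)
    (P : ℕ → Prop) [DecidablePred P] :
    #{x ∈ Xpsi β (2 * n) ψ | P (mCount x k)} = #{f : Fin n → β | P (pairHitCount ψ k f)} := by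
  refine card_bij' (fun x _ => firstHalf x) (fun f _ => symmExtend ψ f) ?_ ?_ ?_ ?_
  · intro x hx
    rw [mem_filter] at hx
    simpa [← mCount_symmExtend hψ hk, symmExtend_firstHalf hψ hx.1] using hx.2
  · intro f hf
    simpa [symmExtend_mem_Xpsi hψ, mCount_symmExtend hψ hk] using hf
  · intro x hx
    exact symmExtend_firstHalf hψ (mem_filter.1 hx).1
  · intro f _
    exact firstHalf_symmExtend f

end SymmetricExtension

section Limits

theorem tendsto_one_sub_div_pow_sub (c : ℝ) (m : ℕ) :
    Tendsto (fun n : ℕ => (1 - c / n) ^ (n - m)) atTop (𝓝 (Real.exp (-c))) := by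
  rw [← tendsto_add_atTop_iff_nat m]
  have h : Tendsto (fun n : ℕ => (n : ℝ) * (-c / ((n + m : ℕ) : ℝ))) atTop (𝓝 (-c)) := by
    have := (tendsto_natCast_div_add_atTop (m : ℝ)).const_mul (-c)
    rw [mul_one] at this
    refine this.congr fun n => ?_
    push_cast
    ring
  refine (Real.tendsto_one_add_pow_exp_of_tendsto h).congr fun n => ?_
  rw [Nat.add_sub_cancel, sub_eq_add_neg, neg_div]

theorem tendsto_choose_sub_mul_inv_pow (k m : ℕ) :
    Tendsto (fun n : ℕ => ((n - m).choose k : ℝ) * ((n : ℝ)⁻¹) ^ k) atTop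
      (𝓝 (1 / k.factorial)) := by
  rw [← tendsto_add_atTop_iff_nat m]
  have h : Tendsto (fun n : ℕ => (n : ℝ) * ((n + m : ℕ) : ℝ)⁻¹) atTop (𝓝 1) := by
    refine (tendsto_natCast_div_add_atTop (m : ℝ)).congr fun n => ?_
    push_cast
    ring
  simpa using ProbabilityTheory.tendsto_choose_mul_pow_atTop k h

theorem tendsto_binomialProb_inv (k : ℕ) :
    Tendsto (fun n : ℕ => binomialProb n k (n : ℝ)⁻¹) atTop
      (𝓝 (Real.exp (-1) / k.factorial)) := by
  convert (tendsto_choose_sub_mul_inv_pow k 0).mul (tendsto_one_sub_div_pow_sub 1 k) using 2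
  · simp [binomialProb]
  · ring

theorem tendsto_trinomialProb_inv (k : ℕ) :
    Tendsto (fun n : ℕ => trinomialProb n k (n : ℝ)⁻¹) atTop
      (𝓝 ((Real.exp (-1) / k.factorial) ^ 2)) := by
  have := ((tendsto_choose_sub_mul_inv_pow k 0).mul (tendsto_choose_sub_mul_inv_pow k k)).mul
    (tendsto_one_sub_div_pow_sub 2 (k + k))
  convert this using 2
  · simp only [trinomialProb, Nat.sub_zero, Nat.sub_sub, div_eq_mul_inv]; ring
  · rw [div_pow, show (-2 : ℝ) = -1 + -1 by norm_num, Real.exp_add]; ring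

end Limits

section SecondMoment

theorem card_filter_mul_sq_le_sum_sq {Ω : Type*} [Fintype Ω] (Y : Ω → ℝ) (p : ℝ) {ε : ℝ}
    (hε : 0 ≤ ε) :
    (#{ω | ε ≤ |Y ω - p|} : ℝ) * ε ^ 2 ≤ ∑ ω, (Y ω - p) ^ 2 := by
  calc (#{ω | ε ≤ |Y ω - p|} : ℝ) * ε ^ 2 = ∑ ω ∈ {ω | ε ≤ |Y ω - p|}, ε ^ 2 := by
        rw [sum_const, nsmul_eq_mul]
    _ ≤ ∑ ω ∈ {ω | ε ≤ |Y ω - p|}, (Y ω - p) ^ 2 := by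
        refine sum_le_sum fun ω hω => ?_
        simpa only [sq_abs] using pow_le_pow_left₀ hε (mem_filter.1 hω).2 2
    _ ≤ ∑ ω, (Y ω - p) ^ 2 :=
        sum_le_sum_of_subset_of_nonneg (subset_univ _) fun _ _ _ => sq_nonneg _

theorem tendsto_card_filter_abs_sub_lt_div_card {Ω : ℕ → Type*} [∀ n, Fintype (Ω n)]
    (Y : ∀ n, Ω n → ℝ) {p ε : ℝ} (hε : 0 < ε) (hΩ : ∀ᶠ n in atTop, Nonempty (Ω n))
    (hmean : Tendsto (fun n => (∑ ω, Y n ω) / Fintype.card (Ω n)) atTop (𝓝 p))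
    (hsq : Tendsto (fun n => (∑ ω, Y n ω ^ 2) / Fintype.card (Ω n)) atTop (𝓝 (p ^ 2))) :
    Tendsto (fun n => (#{ω | |Y n ω - p| < ε} : ℝ) / Fintype.card (Ω n)) atTop (𝓝 1) := by
  have hvar : Tendsto (fun n => (∑ ω, (Y n ω - p) ^ 2) / Fintype.card (Ω n)) atTop (𝓝 0) := by
    have := (hsq.sub (hmean.const_mul (2 * p))).add_const (p ^ 2)
    rw [show p ^ 2 - 2 * p * p + p ^ 2 = 0 by ring] at this
    refine this.congr' ?_
    filter_upwards [hΩ] with n hn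
    have : (Fintype.card (Ω n) : ℝ) ≠ 0 := by exact_mod_cast Fintype.card_ne_zero
    simp only [sub_sq, sum_add_distrib, sum_sub_distrib, ← sum_mul, ← mul_sum, sum_const,
      card_univ, nsmul_eq_mul]
    field_simp
  have hbad : Tendsto (fun n => (#{ω | ε ≤ |Y n ω - p|} : ℝ) / Fintype.card (Ω n)) atTop (𝓝 0) := by
    refine squeeze_zero' (.of_forall fun n => by positivity) ?_
      (by simpa using hvar.div_const (ε ^ 2))
    filter_upwards [hΩ] with n hn
    have hcard : (0 : ℝ) < Fintype.card (Ω n) := by exact_mod_cast Fintype.card_pos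
    rw [div_div, div_le_div_iff₀ hcard (by positivity)]
    linarith [mul_le_mul_of_nonneg_right (card_filter_mul_sq_le_sum_sq (Y n) p hε.le) hcard.le]
  have hgood := hbad.const_sub 1
  rw [sub_zero] at hgood
  refine hgood.congr' ?_
  filter_upwards [hΩ] with n hn
  have hcard : (Fintype.card (Ω n) : ℝ) ≠ 0 := by exact_mod_cast Fintype.card_ne_zero
  have hsplit := card_filter_add_card_filter_not (s := univ) (fun ω => |Y n ω - p| < ε)
  simp only [not_lt, card_univ] at hsplit
  rw [eq_div_iff hcard, sub_mul, div_mul_cancel₀ _ hcard, one_mul, ← hsplit]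
  push_cast
  ring

end SecondMoment

theorem tendsto_div_of_abs_sub_mul_le_rpow {a m : ℕ → ℝ} {θ C η : ℝ} (hη : η < 1)
    (hm : Tendsto m atTop atTop) (h : ∀ᶠ n in atTop, |a n - θ * m n| ≤ C * m n ^ η) :
    Tendsto (fun n => a n / m n) atTop (𝓝 θ) := by
  rw [← tendsto_sub_nhds_zero_iff]
  have hlim : Tendsto (fun n => C * m n ^ (η - 1)) atTop (𝓝 0) := by
    have := (tendsto_rpow_neg_atTop (sub_pos.2 hη)).comp hm
    simpa using this.const_mul C
  refine squeeze_zero_norm' ?_ hlim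
  filter_upwards [h, hm.eventually_gt_atTop 0] with n hn hpos
  rw [Real.norm_eq_abs, Real.rpow_sub_one hpos.ne', ← mul_div_assoc, le_div_iff₀ hpos,
    ← abs_of_pos hpos, ← abs_mul, abs_of_pos hpos, sub_mul, div_mul_cancel₀ _ hpos.ne']
  exact hn


section SymmetricVectors

variable {β : Type*} [Fintype β] {n : ℕ}

theorem two_div_card_eq_inv (hβ : Fintype.card β = 2 * n) :
    (2 : ℝ) / Fintype.card β = (n : ℝ)⁻¹ := by
  rw [hβ, Nat.cast_mul, Nat.cast_ofNat, div_mul_eq_div_div, div_self two_ne_zero, one_div]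

variable [DecidableEq β] {ψ : β → β}

theorem mean_pairHitCount_div (hβ : Fintype.card β = 2 * n) (hn : 1 ≤ n) (k : ℕ) :
    (∑ f : Fin n → β, (pairHitCount ψ k f : ℝ) / (2 * n)) / Fintype.card (Fin n → β) =
      #(fixPts β ψ)ᶜ / (2 * n) * binomialProb n k (n : ℝ)⁻¹ := by
  have : Nonempty β := Fintype.card_pos_iff.1 (by omega)
  rw [← sum_div, div_right_comm, Fintype.card_fun, Nat.cast_pow, sum_pairHitCount_div,
    Fintype.card_fin, two_div_card_eq_inv hβ]
  ring

theorem mean_sq_pairHitCount_div (hψ : Function.Involutive ψ) (hβ : Fintype.card β = 2 * n)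
    (hn : 1 ≤ n) (k : ℕ) :
    (∑ f : Fin n → β, ((pairHitCount ψ k f : ℝ) / (2 * n)) ^ 2) / Fintype.card (Fin n → β) =
      (#(fixPts β ψ)ᶜ / (2 * n)) ^ 2 * trinomialProb n k (n : ℝ)⁻¹ +
        #(fixPts β ψ)ᶜ / (2 * n) *
          (binomialProb n k (n : ℝ)⁻¹ - trinomialProb n k (n : ℝ)⁻¹) / n := by
  have : Nonempty β := Fintype.card_pos_iff.1 (by omega)
  have hn' : (n : ℝ) ≠ 0 := by positivity
  simp only [div_pow, ← sum_div]
  rw [div_right_comm, Fintype.card_fun, Nat.cast_pow, sum_pairHitCount_sq_div hψ,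
    Fintype.card_fin, two_div_card_eq_inv hβ]
  field_simp
  ring

end SymmetricVectors

theorem tendsto_card_compl_fixPts_div {α : ℕ → Type*} [∀ n, Fintype (α n)]
    [∀ n, DecidableEq (α n)] {ψ : ∀ n, α n → α n} {θ η C : ℝ}
    (hcard : ∀ n : ℕ, 1 ≤ n → Fintype.card (α n) = 2 * n) (hη : η < 1)
    (hfix : ∀ n : ℕ, 1 ≤ n →
      |(#(fixPts (α n) (ψ n)) : ℝ) - θ * (2 * (n : ℝ))| ≤ C * (2 * (n : ℝ)) ^ η) :
    Tendsto (fun n => (#(fixPts (α n) (ψ n))ᶜ : ℝ) / (2 * n)) atTop (𝓝 (1 - θ)) := by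
  refine ((tendsto_div_of_abs_sub_mul_le_rpow hη
    (tendsto_natCast_atTop_atTop.const_mul_atTop two_pos)
    ((eventually_ge_atTop 1).mono hfix)).const_sub 1).congr' ?_
  filter_upwards [eventually_ge_atTop 1] with n hn
  have hn' : (n : ℝ) ≠ 0 := by positivity
  rw [card_compl, hcard n hn, Nat.cast_sub (hcard n hn ▸ card_le_univ _)]
  push_cast
  field_simp

open scoped Classical in
theorem stmt_14_general (α : ℕ → Type*) [∀ n, Fintype (α n)] [∀ n, DecidableEq (α n)]
    (hcard : ∀ n : ℕ, 1 ≤ n → Fintype.card (α n) = 2 * n)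
    (ψ : ∀ n, α n → α n) (hψ : ∀ n y, ψ n (ψ n y) = y)
    (θ η C : ℝ) (hη1 : η < 1)
    (hfix : ∀ n : ℕ, 1 ≤ n →
      |((fixPts (α n) (ψ n)).card : ℝ) - θ * (2 * (n : ℝ))| ≤ C * (2 * (n : ℝ)) ^ η)
    (k : ℕ) (hk : Odd k) (ε : ℝ) (hε : 0 < ε) :
    Filter.Tendsto
      (fun n : ℕ => ((2 * (n : ℝ)) ^ n)⁻¹ *
        (((Xpsi (α n) (2 * n) (ψ n)).filter fun x =>
          |(mCount x k : ℝ) / (2 * (n : ℝ)) - (1 - θ) / (Real.exp 1 * k.factorial)| < ε).card : ℝ))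
      Filter.atTop (nhds 1) := by
  have hG := tendsto_card_compl_fixPts_div hcard hη1 hfix
  have hp : (1 - θ) / (Real.exp 1 * k.factorial) = (1 - θ) * (Real.exp (-1) / k.factorial) := by
    rw [Real.exp_neg]
    field_simp
  rw [hp]
  refine (tendsto_card_filter_abs_sub_lt_div_card
    (fun n (f : Fin n → α n) => (pairHitCount (ψ n) k f : ℝ) / (2 * n))
    (p := (1 - θ) * (Real.exp (-1) / k.factorial)) hε ?_ ?_ ?_).congr' ?_
  · filter_upwards [eventually_ge_atTop 1] with n hn
    have : Nonempty (α n) := Fintype.card_pos_iff.1 (by rw [hcard n hn]; omega)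
    infer_instance
  · refine (hG.mul (tendsto_binomialProb_inv k)).congr' ?_
    filter_upwards [eventually_ge_atTop 1] with n hn
    exact (mean_pairHitCount_div (hcard n hn) hn k).symm
  · have hmom := ((hG.pow 2).mul (tendsto_trinomialProb_inv k)).add
      (((hG.mul ((tendsto_binomialProb_inv k).sub (tendsto_trinomialProb_inv k))).div_atTop
        tendsto_natCast_atTop_atTop))
    rw [add_zero, ← mul_pow] at hmom
    refine hmom.congr' ?_
    filter_upwards [eventually_ge_atTop 1] with n hn
    exact (mean_sq_pairHitCount_div (hψ n) (hcard n hn) hn k).symm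
  · filter_upwards [eventually_ge_atTop 1] with n hn
    rw [card_filter_Xpsi_mCount (hψ n) hk
      (fun m => |(m : ℝ) / (2 * n) - (1 - θ) * (Real.exp (-1) / k.factorial)| < ε),
      Fintype.card_fun, Fintype.card_fin, hcard n hn]
    push_cast
    rw [inv_mul_eq_div]

open scoped Classical in
theorem stmt_14 (α : ℕ → Type*) [∀ n, Fintype (α n)] [∀ n, DecidableEq (α n)]
    (hcard : ∀ n : ℕ, 1 ≤ n → Fintype.card (α n) = 2 * n)
    (ψ : ∀ n, α n → α n) (hψ : ∀ n y, ψ n (ψ n y) = y)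
    (θ η C : ℝ) (hθ0 : 0 ≤ θ) (hθ1 : θ ≤ 1) (hη0 : 0 ≤ η) (hη1 : η < 1) (hC : 0 < C)
    (hfix : ∀ n : ℕ, 1 ≤ n →
      |((fixPts (α n) (ψ n)).card : ℝ) - θ * (2 * (n : ℝ))| ≤ C * (2 * (n : ℝ)) ^ η)
    (k : ℕ) (hk : Odd k) (ε : ℝ) (hε : 0 < ε) :
    Filter.Tendsto
      (fun n : ℕ => ((2 * (n : ℝ)) ^ n)⁻¹ *
        (((Xpsi (α n) (2 * n) (ψ n)).filter fun x =>
          |(mCount x k : ℝ) / (2 * (n : ℝ)) - (1 - θ) / (Real.exp 1 * k.factorial)| < ε).card : ℝ))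
      Filter.atTop (nhds 1) :=
  stmt_14_general α hcard ψ hψ θ η C hη1 hfix k hk ε hε
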